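/- Let V be an integrable real random variable and ε ∈ (0,1). The function λ ↦ λ + (1/ε)·E[(V − λ)₊] is convex on ℝ, tends to +∞ as λ → ±∞, and its infimum is attained; moreover its infimum is at least E[V]. -/

import Mathlib

open MeasureTheory Filter

/-- Properties of the Rockafellar–Uryasev function `λ ↦ λ + (1/ε) E[(V − λ)₊]`:
it is convex, tends to +∞ at ±∞, attains its infimum, and its infimum is at
least `E[V]`. -/
theorem rockafellar_uryasev_properties {Ω : Type*} [MeasurableSpace Ω]
    (ℙ : Measure Ω) [IsProbabilityMeasure ℙ] (V : Ω → ℝ) (hV : Measurable V)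
    (hInt : Integrable V ℙ) (ε : ℝ) (hε0 : 0 < ε) (hε1 : ε < 1) :
    ConvexOn ℝ Set.univ (fun l : ℝ => l + (1 / ε) * ∫ ω, max (V ω - l) 0 ∂ℙ) ∧
    Tendsto (fun l : ℝ => l + (1 / ε) * ∫ ω, max (V ω - l) 0 ∂ℙ) atTop atTop ∧
    Tendsto (fun l : ℝ => l + (1 / ε) * ∫ ω, max (V ω - l) 0 ∂ℙ) atBot atTop ∧
    (∃ l0 : ℝ, ∀ l : ℝ,
      l0 + (1 / ε) * ∫ ω, max (V ω - l0) 0 ∂ℙ ≤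
        l + (1 / ε) * ∫ ω, max (V ω - l) 0 ∂ℙ) ∧
    (∀ l : ℝ, (∫ ω, V ω ∂ℙ) ≤ l + (1 / ε) * ∫ ω, max (V ω - l) 0 ∂ℙ) := by
  have hε : (0:ℝ) < 1 / ε := by positivity
  have hε' : (1:ℝ) ≤ 1 / ε := by
    rw [le_div_iff₀ hε0]; linarith
  set g : ℝ → ℝ := fun l => ∫ ω, max (V ω - l) 0 ∂ℙ with hg
  set f : ℝ → ℝ := fun l => l + (1 / ε) * g l with hf
  have hIntl : ∀ l : ℝ, Integrable (fun ω => max (V ω - l) 0) ℙ := fun l =>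
    (hInt.sub (integrable_const l)).pos_part
  -- g is nonnegative
  have hg0 : ∀ l, 0 ≤ g l := fun l =>
    integral_nonneg fun ω => le_max_right _ _
  -- g l ≥ E[V] - l
  have hglb : ∀ l, (∫ ω, V ω ∂ℙ) - l ≤ g l := by
    intro l
    have h1 : (∫ ω, V ω - l ∂ℙ) ≤ g l :=
      integral_mono (hInt.sub (integrable_const l)) (hIntl l)
        fun ω => le_max_left _ _
    rwa [integral_sub hInt (integrable_const l), integral_const,
      probReal_univ, smul_eq_mul, one_mul] at h1
  -- pointwise lower bounds on f
  have hfl : ∀ l, l ≤ f l := by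
    intro l
    have := mul_nonneg hε.le (hg0 l)
    simp only [hf]; linarith
  have hfl2 : ∀ l, (1 - 1/ε) * l + (1/ε) * (∫ ω, V ω ∂ℙ) ≤ f l := by
    intro l
    have h1 := hglb l
    have h2 : (1/ε) * ((∫ ω, V ω ∂ℙ) - l) ≤ (1/ε) * g l :=
      mul_le_mul_of_nonneg_left h1 hε.le
    simp only [hf]; nlinarith
  -- g is 1-Lipschitz
  have hgLip : LipschitzWith 1 g := by
    apply LipschitzWith.of_dist_le_mul
    intro x y
    rw [NNReal.coe_one, one_mul, Real.dist_eq, Real.dist_eq]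
    have h1 : g x - g y = ∫ ω, (max (V ω - x) 0 - max (V ω - y) 0) ∂ℙ := by
      rw [integral_sub (hIntl x) (hIntl y)]
    rw [h1]
    calc |∫ ω, (max (V ω - x) 0 - max (V ω - y) 0) ∂ℙ|
        ≤ ∫ ω, |max (V ω - x) 0 - max (V ω - y) 0| ∂ℙ := by
          simpa [Real.norm_eq_abs] using
            norm_integral_le_integral_norm (μ := ℙ)
              (fun ω => max (V ω - x) 0 - max (V ω - y) 0)
      _ ≤ ∫ (_ : Ω), |x - y| ∂ℙ := by
          apply integral_mono ((hIntl x).sub (hIntl y)).abs (integrable_const _)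
          intro ω
          calc |max (V ω - x) 0 - max (V ω - y) 0| ≤ |(V ω - x) - (V ω - y)| :=
                abs_max_sub_max_le_abs _ _ _
            _ = |x - y| := by rw [abs_sub_comm]; ring_nf
      _ = |x - y| := by
          rw [integral_const, probReal_univ, smul_eq_mul, one_mul]
  have hfCont : Continuous f :=
    continuous_id.add (continuous_const.mul hgLip.continuous)
  -- convexity
  have hgConv : ConvexOn ℝ Set.univ g := by
    refine ⟨convex_univ, fun x _ y _ a b ha hb hab => ?_⟩
    simp only [smul_eq_mul, g]
    have key : ∀ ω, max (V ω - (a * x + b * y)) 0 ≤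
        a * max (V ω - x) 0 + b * max (V ω - y) 0 := by
      intro ω
      have h1 : V ω - (a * x + b * y) = a * (V ω - x) + b * (V ω - y) := by
        linarith [mul_comm a (V ω), (by linear_combination (V ω) * hab : (a+b) * V ω = V ω), (by ring : a*(V ω - x)+b*(V ω - y) = (a+b)*V ω - (a*x+b*y))]
      rw [h1, mul_max_of_nonneg _ _ ha, mul_max_of_nonneg _ _ hb]
      calc (a * (V ω - x) + b * (V ω - y)) ⊔ 0
          = (a * (V ω - x) + b * (V ω - y)) ⊔ (a * 0 + b * 0) := by ring_nf
        _ ≤ (a * (V ω - x)) ⊔ (a * 0) + (b * (V ω - y)) ⊔ (b * 0) :=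
            max_add_add_le_max_add_max
    calc (∫ ω, max (V ω - (a * x + b * y)) 0 ∂ℙ)
        ≤ ∫ ω, (a * max (V ω - x) 0 + b * max (V ω - y) 0) ∂ℙ :=
          integral_mono (hIntl _)
            (((hIntl x).const_mul a).add ((hIntl y).const_mul b)) key
      _ = a * (∫ ω, max (V ω - x) 0 ∂ℙ) + b * (∫ ω, max (V ω - y) 0 ∂ℙ) := by
          rw [integral_add ((hIntl x).const_mul a) ((hIntl y).const_mul b),
            integral_const_mul, integral_const_mul]
  have hfConv : ConvexOn ℝ Set.univ f := by
    have h1 : ConvexOn ℝ Set.univ (fun l : ℝ => l) :=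
      (convexOn_id convex_univ)
    exact h1.add (hgConv.smul hε.le)
  -- tendsto atTop
  have hTop : Tendsto f atTop atTop := tendsto_atTop_mono hfl tendsto_id
  -- tendsto atBot → atTop
  have hBot : Tendsto f atBot atTop := by
    apply tendsto_atTop_mono hfl2
    apply tendsto_atTop_add_const_right
    have h2 : (1:ℝ) < 1 / ε := one_lt_one_div hε0 hε1
    exact (tendsto_const_mul_atTop_of_neg (by linarith)).mpr tendsto_id
  -- min attained
  have hMin : ∃ l0 : ℝ, ∀ l : ℝ, f l0 ≤ f l := by
    apply hfCont.exists_forall_le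
    rw [cocompact_eq_atBot_atTop]
    exact Tendsto.sup hBot hTop
  -- lower bound E[V]
  have hEV : ∀ l, (∫ ω, V ω ∂ℙ) ≤ f l := by
    intro l
    rcases le_or_gt (∫ ω, V ω ∂ℙ) l with h | h
    · exact h.trans (hfl l)
    · have h1 := hfl2 l
      have h2 : (1 - 1/ε) * (∫ ω, V ω ∂ℙ) ≤ (1 - 1/ε) * l :=
        mul_le_mul_of_nonpos_left h.le (by linarith)
      calc (∫ ω, V ω ∂ℙ)
          = (1 - 1/ε) * (∫ ω, V ω ∂ℙ) + (1/ε) * (∫ ω, V ω ∂ℙ) := by ring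
        _ ≤ (1 - 1/ε) * l + (1/ε) * (∫ ω, V ω ∂ℙ) := by linarith
        _ ≤ f l := h1
  exact ⟨hfConv, hTop, hBot, hMin, hEV⟩
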